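/- (Splitting a Minimal Homotopy, part 1.) Let γ₁, γ₂, γ₃ : [0,1] → ℂ be continuous paths with common endpoints such that the range of γ₂ is Lebesgue-null, let H₁ be a homotopy from γ₁ to γ₂ and H₂ a homotopy from γ₂ to γ₃, and suppose the concatenation H = H₁ + H₂ is minimum, i.e. Area(H) = σ(γ₁, γ₃) < ∞. Then the sub-homotopies are also minimum: Area(H₁) = σ(γ₁, γ₂) and Area(H₂) = σ(γ₂, γ₃). -/

import Mathlib

open MeasureTheory unitInterval ENNReal

noncomputable section

/-- `homE H p` is the number of connected components of the fiber `H⁻¹({p})`,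
as an extended natural number. -/
def homE {a b : ℂ} {γ₁ γ₂ : Path a b} (H : Path.Homotopy γ₁ γ₂) (p : ℂ) : ℕ∞ :=
  ENat.card (ConnectedComponents ↥(⇑H ⁻¹' {p}))

/-- The homotopy area `Area(H) = ∫⁻ x, E_H(x)`. -/
def homArea {a b : ℂ} {γ₁ γ₂ : Path a b} (H : Path.Homotopy γ₁ γ₂) : ℝ≥0∞ :=
  ∫⁻ p, (homE H p : ℝ≥0∞)

/-- The minimum homotopy area `σ(γ₁, γ₂)`, the infimum of `Area(H)` over all
homotopies rel endpoints from `γ₁` to `γ₂`. -/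
def minHomArea {a b : ℂ} (γ₁ γ₂ : Path a b) : ℝ≥0∞ :=
  ⨅ H : Path.Homotopy γ₁ γ₂, homArea H

/-!
Off the range of `γ₂`, a null set, the fibre of `H₁ + H₂` over `p` is the disjoint union of two
closed pieces, affine copies of the fibres of `H₁` and `H₂`. Hence `E_{H₁+H₂} = E_{H₁} + E_{H₂}`
almost everywhere, and `Area(H₁ + H₂) = Area(H₁) + Area(H₂)` once `E_H` is known to be measurable.
For measurability, `{p | n ≤ E_H(p)}` is the image under `H` of the set of `n`-tuples of points of a
common fibre lying in pairwise distinct components of it; that set is locally closed (distinct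
components of a fibre of the closed map `H` stay apart under perturbation), hence σ-compact.
Finally, if some `K₁` had smaller area than `H₁`, then `K₁ + H₂` would beat the minimum `H₁ + H₂`,
all areas involved being finite.
-/

open Set Topology Function

theorem ENat.natCast_le_card_iff {α : Type*} {n : ℕ} :
    (n : ℕ∞) ≤ ENat.card α ↔ Nonempty (Fin n ↪ α) := by
  refine ⟨fun h => Cardinal.lift_mk_le'.1 ?_, fun ⟨e⟩ => by
    simpa using ENat.card_le_card_of_injective e.injective⟩
  rw [ENat.card, Cardinal.natCast_le_toENat] at h
  simpa using h

theorem ENat.card_sigma_bool (β : Bool → Type*) :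
    ENat.card (Σ b, β b) = ENat.card (β false) + ENat.card (β true) := by
  rw [← ENat.card_sum]
  exact ENat.card_congr <| (Equiv.sigmaCongrRight fun b => by cases b <;> exact Equiv.refl _).trans
    (Equiv.sumEquivSigmaBool _ _).symm

theorem ENat.measurable_of_measurableSet_le {α : Type*} [MeasurableSpace α] {f : α → ℕ∞}
    (hf : ∀ n : ℕ, MeasurableSet {a | (n : ℕ∞) ≤ f a}) : Measurable f := by
  refine ENat.measurable_iff.2 fun n => ?_
  convert (hf n).diff (hf (n + 1)) using 1
  ext a
  simp only [mem_preimage, mem_singleton_iff, mem_sdiff, mem_ofPred_eq, Nat.cast_add, Nat.cast_one]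
  induction f a using ENat.recTopCoe <;> simp [ENat.add_one_le_iff]; omega

theorem IsSigmaCompact.measurableSet {X : Type*} [TopologicalSpace X] [T2Space X]
    [MeasurableSpace X] [OpensMeasurableSpace X] {s : Set X} (hs : IsSigmaCompact s) :
    MeasurableSet s := by
  obtain ⟨K, hK, rfl⟩ := hs
  exact .iUnion fun n => (hK n).measurableSet

theorem IsLocallyClosed.isSigmaCompact {X : Type*} [TopologicalSpace X] [LocallyCompactSpace X]
    [SecondCountableTopology X] {s : Set X} (hs : IsLocallyClosed s) : IsSigmaCompact s := by
  have := hs.locallyCompactSpace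
  exact isSigmaCompact_iff_sigmaCompactSpace.2 inferInstance

section ConnectedComponents

variable {X : Type*} [TopologicalSpace X]

theorem card_connectedComponents_congr {Y : Type*} [TopologicalSpace Y] (e : X ≃ₜ Y) :
    ENat.card (ConnectedComponents X) = ENat.card (ConnectedComponents Y) :=
  ENat.card_congr (e.isQuotientMap.isCoinducing.connectedComponentsHomeomorph fun y => by
    simpa [← e.image_symm] using isConnected_singleton).toEquiv

theorem card_connectedComponents_union {s t : Set X} (hs : IsClosed s) (ht : IsClosed t)
    (hst : Disjoint s t) :
    ENat.card (ConnectedComponents ↥(s ∪ t)) =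
      ENat.card (ConnectedComponents s) + ENat.card (ConnectedComponents t) := by
  let U : Bool → Set ↥(s ∪ t) := fun b => Subtype.val ⁻¹' bif b then t else s
  have hs' : IsClosed (U false) := hs.preimage continuous_subtype_val
  have ht' : IsClosed (U true) := ht.preimage continuous_subtype_val
  have hcompl : (U false)ᶜ = U true := by
    ext ⟨x, hx⟩
    exact ⟨hx.resolve_left, fun hxt hxs => hst.ne_of_mem hxs hxt rfl⟩
  have hclopen : ∀ b, IsClopen (U b) := by
    rintro (_ | _)
    · exact ⟨hs', by rw [← compl_compl (U false), hcompl]; exact ht'.isOpen_compl⟩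
    · exact ⟨ht', hcompl ▸ hs'.isOpen_compl⟩
  have hdisj : Pairwise (Disjoint on U) := by
    rintro (_ | _) (_ | _) h <;> simp only [ne_eq, not_true_eq_false] at h <;>
      [exact hst.preimage _; exact hst.symm.preimage _]
  have hunion : ⋃ b, U b = univ := by
    ext ⟨x, hx⟩
    simpa [U, or_comm] using hx
  have hpiece : ∀ b, ENat.card (ConnectedComponents (U b)) =
      ENat.card (ConnectedComponents ↥(bif b then t else s)) := fun b =>
    card_connectedComponents_congr <| IsEmbedding.subtypeVal.homeomorphOfSubsetRange <| by
      rw [Subtype.range_coe]; cases b; exacts [subset_union_left, subset_union_right]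
  rw [ENat.card_congr (ConnectedComponents.equivOfIsClopen hclopen hdisj hunion),
    ENat.card_sigma_bool, hpiece, hpiece]
  rfl

theorem mem_connectedComponentIn_iff_mk_eq {F : Set X} {x y : X} (hx : x ∈ F) (hy : y ∈ F) :
    y ∈ connectedComponentIn F x ↔
      ConnectedComponents.mk (⟨y, hy⟩ : F) = ConnectedComponents.mk ⟨x, hx⟩ := by
  rw [connectedComponentIn_eq_image hx, ConnectedComponents.coe_eq_coe']
  exact Subtype.val_injective.mem_set_image (a := ⟨y, hy⟩)

theorem natCast_le_card_connectedComponents_iff {F : Set X} {n : ℕ} :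
    (n : ℕ∞) ≤ ENat.card (ConnectedComponents F) ↔
      ∃ x : Fin n → X, (∀ i, x i ∈ F) ∧ Pairwise fun i j => x j ∉ connectedComponentIn F (x i) := by
  rw [ENat.natCast_le_card_iff]
  constructor
  · rintro ⟨e⟩
    choose z hz using fun i => ConnectedComponents.surjective_coe (e i)
    refine ⟨fun i => z i, fun i => (z i).2, fun i j hij hmem => hij (e.injective ?_)⟩
    rw [← hz, ← hz]
    exact ((mem_connectedComponentIn_iff_mk_eq (z i).2 (z j).2).1 hmem).symm
  · rintro ⟨x, hxF, hx⟩
    refine ⟨⟨fun i => ConnectedComponents.mk ⟨x i, hxF i⟩, fun i j hij => ?_⟩⟩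
    by_contra hne
    exact hx hne ((mem_connectedComponentIn_iff_mk_eq (hxF i) (hxF j)).2 hij.symm)

theorem exists_isOpen_separation_of_notMem_connectedComponentIn [T2Space X] {F : Set X}
    (hF : IsCompact F) {x y : X} (hx : x ∈ F) (hy : y ∈ F) (hxy : y ∉ connectedComponentIn F x) :
    ∃ U V : Set X, IsOpen U ∧ IsOpen V ∧ Disjoint U V ∧ F ⊆ U ∪ V ∧ x ∈ U ∧ y ∈ V := by
  have := isCompact_iff_compactSpace.1 hF
  rw [connectedComponentIn_eq_image hx] at hxy
  replace hxy : (⟨y, hy⟩ : F) ∉ connectedComponent ⟨x, hx⟩ :=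
    fun h => hxy (Subtype.val_injective.mem_set_image.2 h)
  rw [connectedComponent_eq_iInter_isClopen, mem_iInter, not_forall] at hxy
  obtain ⟨⟨Z, hZ, hxZ⟩, hyZ⟩ := hxy
  obtain ⟨U, V, hU, hV, hZU, hZV, hUV⟩ := SeparatedNhds.of_isCompact_isCompact
    (hZ.isClosed.isCompact.image continuous_subtype_val)
    (hZ.compl.isClosed.isCompact.image continuous_subtype_val)
    ((disjoint_image_iff Subtype.val_injective).2 disjoint_compl_right)
  refine ⟨U, V, hU, hV, hUV, fun w hw => ?_, hZU ⟨_, hxZ, rfl⟩, hZV ⟨_, hyZ, rfl⟩⟩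
  by_cases hwZ : (⟨w, hw⟩ : F) ∈ Z
  exacts [.inl (hZU ⟨_, hwZ, rfl⟩), .inr (hZV ⟨_, hwZ, rfl⟩)]

theorem isClosed_setOf_mem_connectedComponentIn_fiber [CompactSpace X] [T2Space X] {Y : Type*}
    [TopologicalSpace Y] [T2Space Y] {f : X → Y} (hf : Continuous f) :
    IsClosed {z : X × X | z.2 ∈ connectedComponentIn (f ⁻¹' {f z.1}) z.1} := by
  rw [← isOpen_compl_iff, isOpen_iff_mem_nhds]
  rintro ⟨x, y⟩ hxy
  change y ∉ connectedComponentIn (f ⁻¹' {f x}) x at hxy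
  by_cases hfy : f y = f x
  · obtain ⟨U, V, hU, hV, hUV, hfib, hxU, hyV⟩ :=
      exists_isOpen_separation_of_notMem_connectedComponentIn
        (isClosed_singleton.preimage hf).isCompact rfl hfy hxy
    -- `f` is a closed map, so the fibres near `f x` stay inside `U ∪ V`.
    have hW : ∀ᶠ q in 𝓝 (f x), f ⁻¹' {q} ⊆ U ∪ V :=
      hf.isClosedMap.eventually_nhds_fiber (p := (· ∈ U ∪ V)) _ fun w hw =>
        (hU.union hV).mem_nhds (hfib hw)
    filter_upwards [continuous_fst.continuousAt.eventually_mem (hU.mem_nhds hxU),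
      continuous_fst.continuousAt.eventually ((hf.tendsto x).eventually hW),
      continuous_snd.continuousAt.eventually_mem (hV.mem_nhds hyV)] with z hzU hsub hzV hmem
    have hcomp : connectedComponentIn (f ⁻¹' {f z.1}) z.1 ⊆ U :=
      isPreconnected_connectedComponentIn.subset_left_of_subset_union hU hV hUV
        ((connectedComponentIn_subset _ _).trans hsub) ⟨z.1, mem_connectedComponentIn rfl, hzU⟩
    exact hUV.ne_of_mem (hcomp hmem) hzV rfl
  · filter_upwards [(isOpen_ne_fun (hf.comp continuous_snd) (hf.comp continuous_fst)).mem_nhds hfy]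
      with z hz hmem
    exact hz (connectedComponentIn_subset (f ⁻¹' {f z.1}) z.1 hmem)

theorem setOf_succ_le_card_connectedComponents_fiber_eq_image {Y : Type*} (f : X → Y) (n : ℕ) :
    {p | ((n + 1 : ℕ) : ℕ∞) ≤ ENat.card (ConnectedComponents ↥(f ⁻¹' {p}))} =
      (fun x : Fin (n + 1) → X => f (x 0)) ''
        {x | (∀ i, f (x i) = f (x 0)) ∧
          Pairwise fun i j => x j ∉ connectedComponentIn (f ⁻¹' {f (x i)}) (x i)} := by
  ext p
  simp only [mem_ofPred_eq, natCast_le_card_connectedComponents_iff, mem_image, mem_preimage,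
    mem_singleton_iff]
  constructor
  · rintro ⟨x, hxp, hx⟩
    refine ⟨x, ⟨fun i => (hxp i).trans (hxp 0).symm, fun i j hij => ?_⟩, hxp 0⟩
    simpa only [hxp i] using hx hij
  · rintro ⟨x, ⟨hx0, hx⟩, rfl⟩
    exact ⟨x, hx0, fun i j hij => by rw [← hx0 i]; exact hx hij⟩

theorem measurable_card_connectedComponents_fiber [CompactSpace X] [T2Space X]
    [SecondCountableTopology X] {Y : Type*} [TopologicalSpace Y] [T2Space Y] [MeasurableSpace Y]
    [OpensMeasurableSpace Y] {f : X → Y} (hf : Continuous f) :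
    Measurable fun p => ENat.card (ConnectedComponents ↥(f ⁻¹' {p})) := by
  refine ENat.measurable_of_measurableSet_le fun n => ?_
  cases n with
  | zero => simp
  | succ n =>
    rw [setOf_succ_le_card_connectedComponents_fiber_eq_image]
    have hclosed : IsClosed {x : Fin (n + 1) → X | ∀ i, f (x i) = f (x 0)} := by
      simp only [ofPred_forall]
      exact isClosed_iInter fun i =>
        isClosed_eq (hf.comp (continuous_apply i)) (hf.comp (continuous_apply 0))
    have hopen : IsOpen {x : Fin (n + 1) → X |
        Pairwise fun i j => x j ∉ connectedComponentIn (f ⁻¹' {f (x i)}) (x i)} := by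
      simp only [Pairwise, ofPred_forall]
      refine isOpen_iInter_of_finite fun i => isOpen_iInter_of_finite fun j =>
        isOpen_iInter_of_finite fun _ => ?_
      have hij : Continuous fun x : Fin (n + 1) → X => (x i, x j) := by fun_prop
      exact (isClosed_setOf_mem_connectedComponentIn_fiber hf).isOpen_compl.preimage hij
    exact ((hclosed.isLocallyClosed.inter hopen.isLocallyClosed).isSigmaCompact.image
      (hf.comp (continuous_apply 0))).measurableSet

end ConnectedComponents

namespace unitInterval

def lowerHalf (s : I) : I := ⟨s / 2, by constructor <;> linarith [s.2.1, s.2.2]⟩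

def upperHalf (s : I) : I := ⟨(s + 1) / 2, by constructor <;> linarith [s.2.1, s.2.2]⟩

@[simp] theorem coe_lowerHalf (s : I) : (lowerHalf s : ℝ) = s / 2 := rfl
@[simp] theorem coe_upperHalf (s : I) : (upperHalf s : ℝ) = (s + 1) / 2 := rfl

theorem isClosedEmbedding_lowerHalf : IsClosedEmbedding lowerHalf :=
  (continuous_subtype_val.div_const 2).subtype_mk _ |>.isClosedEmbedding fun s s' h =>
    Subtype.ext <| by simpa using congrArg Subtype.val h

theorem isClosedEmbedding_upperHalf : IsClosedEmbedding upperHalf :=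
  ((continuous_subtype_val.add continuous_const).div_const 2).subtype_mk _ |>.isClosedEmbedding
    fun s s' h => Subtype.ext <| by simpa using congrArg Subtype.val h

theorem mem_range_lowerHalf_or_upperHalf (s : I) : s ∈ range lowerHalf ∨ s ∈ range upperHalf := by
  rcases le_or_gt (s : ℝ) (1 / 2) with h | h
  · exact .inl ⟨⟨2 * s, by constructor <;> linarith [s.2.1]⟩, Subtype.ext (by simp)⟩
  · exact .inr ⟨⟨2 * s - 1, by constructor <;> linarith [s.2.2]⟩, Subtype.ext (by simp)⟩

theorem lowerHalf_eq_upperHalf {s s' : I} (h : lowerHalf s = upperHalf s') : s = 1 ∧ s' = 0 := by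
  have h' : (s : ℝ) = s' + 1 := by simpa using congrArg Subtype.val h
  exact ⟨Subtype.ext (show (s : ℝ) = 1 by linarith [s.2.2, s'.2.1]),
    Subtype.ext (show (s' : ℝ) = 0 by linarith [s.2.2, s'.2.1])⟩

end unitInterval

namespace ContinuousMap.Homotopy

variable {X Y : Type*} [TopologicalSpace X] [TopologicalSpace Y] {f₀ f₁ f₂ : C(X, Y)}
  (F : Homotopy f₀ f₁) (G : Homotopy f₁ f₂)

theorem trans_apply_lowerHalf (s : I) (x : X) : F.trans G (lowerHalf s, x) = F (s, x) := by
  have hs : ((lowerHalf s : I) : ℝ) ≤ 1 / 2 := by rw [coe_lowerHalf]; linarith [s.2.2]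
  rw [trans_apply, dif_pos hs]
  congr
  exact (show 2 * ((s : ℝ) / 2) = s by ring)

theorem trans_apply_upperHalf (s : I) (x : X) : F.trans G (upperHalf s, x) = G (s, x) := by
  rcases eq_or_ne s 0 with rfl | hs
  · have h : upperHalf 0 = lowerHalf 1 := Subtype.ext (by simp)
    rw [h, trans_apply_lowerHalf, apply_one, apply_zero]
  · have hs' : ¬ ((upperHalf s : I) : ℝ) ≤ 1 / 2 := by
      have : (0 : ℝ) < s := unitInterval.pos_iff_ne_zero.2 hs
      rw [coe_upperHalf]; linarith
    rw [trans_apply, dif_neg hs']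
    congr
    exact (show 2 * (((s : ℝ) + 1) / 2) - 1 = s by ring)

theorem preimage_trans_singleton (p : Y) :
    F.trans G ⁻¹' {p} =
      Prod.map lowerHalf id '' (F ⁻¹' {p}) ∪ Prod.map upperHalf id '' (G ⁻¹' {p}) := by
  ext ⟨s, x⟩
  constructor
  · intro hp
    rcases mem_range_lowerHalf_or_upperHalf s with ⟨u, rfl⟩ | ⟨u, rfl⟩
    · exact .inl ⟨(u, x), by simpa [trans_apply_lowerHalf] using hp, rfl⟩
    · exact .inr ⟨(u, x), by simpa [trans_apply_upperHalf] using hp, rfl⟩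
  · rintro (⟨⟨u, y⟩, hu, h⟩ | ⟨⟨u, y⟩, hu, h⟩) <;> obtain ⟨rfl, rfl⟩ := Prod.ext_iff.1 h
    · simpa [trans_apply_lowerHalf] using hu
    · simpa [trans_apply_upperHalf] using hu

theorem disjoint_image_lowerHalf_image_upperHalf {p : Y} (hp : p ∉ range f₁) :
    Disjoint (Prod.map lowerHalf id '' (F ⁻¹' {p})) (Prod.map upperHalf id '' (G ⁻¹' {p})) := by
  rw [Set.disjoint_left]
  rintro _ ⟨⟨s, x⟩, hs, rfl⟩ ⟨⟨s', x'⟩, -, h⟩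
  obtain ⟨h₁, -⟩ := Prod.ext_iff.1 h
  obtain ⟨rfl, -⟩ := lowerHalf_eq_upperHalf h₁.symm
  exact hp ⟨x, by simpa using hs⟩

theorem card_connectedComponents_preimage_trans [T1Space Y] {p : Y} (hp : p ∉ range f₁) :
    ENat.card (ConnectedComponents ↥(F.trans G ⁻¹' {p})) =
      ENat.card (ConnectedComponents ↥(F ⁻¹' {p})) +
        ENat.card (ConnectedComponents ↥(G ⁻¹' {p})) := by
  have h₀ : IsClosedEmbedding (Prod.map lowerHalf (id : X → X)) :=
    isClosedEmbedding_lowerHalf.prodMap .id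
  have h₁ : IsClosedEmbedding (Prod.map upperHalf (id : X → X)) :=
    isClosedEmbedding_upperHalf.prodMap .id
  rw [preimage_trans_singleton, card_connectedComponents_union
      (h₀.isClosedMap _ (isClosed_singleton.preimage F.continuous))
      (h₁.isClosedMap _ (isClosed_singleton.preimage G.continuous))
      (disjoint_image_lowerHalf_image_upperHalf F G hp),
    ← card_connectedComponents_congr (h₀.isEmbedding.homeomorphImage _),
    ← card_connectedComponents_congr (h₁.isEmbedding.homeomorphImage _)]

end ContinuousMap.Homotopy

section HomotopyArea

variable {a b : ℂ} {γ₁ γ₂ γ₃ : Path a b}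

theorem measurable_homE (H : Path.Homotopy γ₁ γ₂) : Measurable fun p => (homE H p : ℝ≥0∞) :=
  measurable_from_top.comp (measurable_card_connectedComponents_fiber H.continuous)

theorem homE_trans (H₁ : Path.Homotopy γ₁ γ₂) (H₂ : Path.Homotopy γ₂ γ₃) {p : ℂ}
    (hp : p ∉ range γ₂) : homE (H₁.trans H₂) p = homE H₁ p + homE H₂ p :=
  H₁.toHomotopy.card_connectedComponents_preimage_trans H₂.toHomotopy hp

theorem homArea_trans (H₁ : Path.Homotopy γ₁ γ₂) (H₂ : Path.Homotopy γ₂ γ₃)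
    (hnull : volume (range γ₂) = 0) : homArea (H₁.trans H₂) = homArea H₁ + homArea H₂ := by
  rw [homArea, homArea, homArea, ← lintegral_add_left (measurable_homE H₁)]
  refine lintegral_congr_ae ?_
  filter_upwards [compl_mem_ae_iff.2 hnull] with p hp
  rw [homE_trans H₁ H₂ hp, ENat.toENNReal_add]

end HomotopyArea

/-- Splitting a minimal homotopy, part 1: the sub-homotopies of a minimum
concatenated homotopy are themselves minimum. -/
theorem stmt_6 {a b : ℂ} (γ₁ γ₂ γ₃ : Path a b)
    (H₁ : Path.Homotopy γ₁ γ₂) (H₂ : Path.Homotopy γ₂ γ₃)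
    (hnull : volume (Set.range γ₂) = 0)
    (hmin : homArea (H₁.trans H₂) = minHomArea γ₁ γ₃)
    (hfin : minHomArea γ₁ γ₃ < ⊤) :
    homArea H₁ = minHomArea γ₁ γ₂ ∧ homArea H₂ = minHomArea γ₂ γ₃ := by
  have hsum : homArea H₁ + homArea H₂ = minHomArea γ₁ γ₃ := by
    rw [← homArea_trans H₁ H₂ hnull, hmin]
  have hfin₁ : homArea H₁ ≠ ⊤ := (ENNReal.add_lt_top.1 (hsum ▸ hfin)).1.ne
  have hfin₂ : homArea H₂ ≠ ⊤ := (ENNReal.add_lt_top.1 (hsum ▸ hfin)).2.ne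
  have hle : ∀ (K₁ : Path.Homotopy γ₁ γ₂) (K₂ : Path.Homotopy γ₂ γ₃),
      homArea H₁ + homArea H₂ ≤ homArea K₁ + homArea K₂ := fun K₁ K₂ => by
    rw [hsum, ← homArea_trans K₁ K₂ hnull]
    exact iInf_le _ _
  refine ⟨le_antisymm (le_iInf fun K₁ => ?_) (iInf_le _ H₁),
    le_antisymm (le_iInf fun K₂ => ?_) (iInf_le _ H₂)⟩
  · exact (ENNReal.add_le_add_iff_right hfin₂).1 (hle K₁ H₂)
  · exact (ENNReal.add_le_add_iff_left hfin₁).1 (hle H₁ K₂)
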